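/- Let R = k[[X,Y,Z]] over a field k. The ideal I = (X^4, X^3Y, X^2Y^2, XY^3, Y^4, Z) (the integral closure of (X^4, Y^4, Z)) is integrally closed and m-primary with μ(I) = 6 > 5 = d+2 (d = 3), yet the embedding dimension of R/I is 2 (i.e., I contains the part Z of a regular system of parameters of length 1 = d−2). -/

import Mathlib

/-- `r` is integral over the ideal `I`: it satisfies an equation
`r^m + a_1 r^(m-1) + ... + a_m = 0` with `a_j ∈ I^j`. -/
def IsIntegralOverIdeal {R : Type*} [CommRing R] (I : Ideal R) (r : R) : Prop :=
  ∃ m : ℕ, 0 < m ∧ ∃ a : ℕ → R, (∀ j ∈ Finset.Icc 1 m, a j ∈ I ^ j) ∧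
    r ^ m + ∑ j ∈ Finset.Icc 1 m, a j * r ^ (m - j) = 0

/-- An ideal is integrally closed if it contains every element integral over it. -/
def Ideal.IsIntClosed {R : Type*} [CommRing R] (I : Ideal R) : Prop :=
  ∀ r, IsIntegralOverIdeal I r → r ∈ I

/-- The minimal number of generators of a submodule. -/
noncomputable def nu {R M : Type*} [Semiring R] [AddCommMonoid M] [Module R M]
    (N : Submodule R M) : ℕ :=
  sInf {n | ∃ s : Finset M, s.card = n ∧ Submodule.span R (s : Set M) = N}

/-- The ideal `I` contains a part of a regular system of parameters of length `n`,
where `m` is the maximal ideal, minimally generated by `d` elements. -/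
def ContainsPartRSOP {R : Type*} [CommRing R] (m I : Ideal R) (n d : ℕ) : Prop :=
  ∃ s : Finset R, s.card = n ∧ (s : Set R) ⊆ (I : Set R) ∧
    ∃ t : Finset R, s ⊆ t ∧ t.card = d ∧ Ideal.span (t : Set R) = m


section Aux

open MvPowerSeries Finsupp
set_option linter.unnecessarySeqFocus false
set_option maxHeartbeats 1000000

variable {k : Type*} [Field k]

local notation "R3" => MvPowerSeries (Fin 3) k

lemma X_ne (i j : Fin 3) (h : i ≠ j) : (X i : R3) ≠ X j := by
  classical
  intro he
  have := congrArg (coeff (R := k) (Finsupp.single i 1)) he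
  rw [coeff_X, if_pos rfl, coeff_X, if_neg] at this
  · exact one_ne_zero this
  · intro hee
    have := congrArg (fun (d : Fin 3 →₀ ℕ) => d i) hee
    simp [Finsupp.single_apply, Ne.symm h] at this

/-- weight -/
def wt (d : Fin 3 →₀ ℕ) : ℕ := d 0 + d 1 + 4 * d 2

lemma wt_add (a b : Fin 3 →₀ ℕ) : wt (a + b) = wt a + wt b := by
  simp [wt, Finsupp.add_apply]; ring

/-- the ideal of series all of whose monomials have weight ≥ n -/
def AA (k : Type*) [Field k] (n : ℕ) : Ideal (MvPowerSeries (Fin 3) k) where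
  carrier := {f | ∀ d, coeff (R := k) d f ≠ 0 → n ≤ wt d}
  zero_mem' := by intro d hd; simp at hd
  add_mem' := by
    intro f g hf hg d hd
    by_cases h1 : coeff (R := k) d f ≠ 0
    · exact hf d h1
    · push_neg at h1
      refine hg d ?_
      simpa [h1] using hd
  smul_mem' := by
    classical
    intro c f hf d hd
    rw [smul_eq_mul, coeff_mul] at hd
    obtain ⟨p, hp, hne⟩ := Finset.exists_ne_zero_of_sum_ne_zero hd
    have h2 := right_ne_zero_of_mul hne
    have := hf p.2 h2
    have hps : p.1 + p.2 = d := by rwa [Finset.HasAntidiagonal.mem_antidiagonal] at hp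
    calc n ≤ wt p.2 := this
    _ ≤ wt p.1 + wt p.2 := Nat.le_add_left _ _
    _ = wt d := by rw [← wt_add, hps]

lemma mul_mem_AA {a b : ℕ} {f g : R3} (hf : f ∈ AA k a) (hg : g ∈ AA k b) :
    f * g ∈ AA k (a + b) := by
  classical
  intro d hd
  rw [coeff_mul] at hd
  obtain ⟨p, hp, hne⟩ := Finset.exists_ne_zero_of_sum_ne_zero hd
  have hps : p.1 + p.2 = d := by rwa [Finset.HasAntidiagonal.mem_antidiagonal] at hp
  have h1 := hf p.1 (left_ne_zero_of_mul hne)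
  have h2 := hg p.2 (right_ne_zero_of_mul hne)
  calc a + b ≤ wt p.1 + wt p.2 := Nat.add_le_add h1 h2
  _ = wt d := by rw [← wt_add, hps]

lemma AA_mono {a b : ℕ} (h : a ≤ b) : AA k b ≤ AA k a := by
  intro f hf d hd
  exact le_trans h (hf d hd)

lemma pow_le_AA {K : Ideal R3} {a : ℕ} (hK : K ≤ AA k a) (j : ℕ) :
    K ^ j ≤ AA k (a * j) := by
  induction j with
  | zero => intro f _ d _; simp
  | succ n ih =>
    rw [pow_succ]
    refine le_trans (Ideal.mul_le.mpr ?_) le_rfl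
    intro r hr s hs
    have := mul_mem_AA (ih hr) (hK hs)
    simpa [Nat.mul_succ] using this

def vv : Fin 6 → Fin 3 → ℕ := ![![4,0,0],![3,1,0],![2,2,0],![1,3,0],![0,4,0],![0,0,1]]

noncomputable def EE (i : Fin 6) : Fin 3 →₀ ℕ := Finsupp.equivFunOnFinite.symm (vv i)

lemma EE_apply (i : Fin 6) (j : Fin 3) : EE i j = vv i j := by simp [EE]

lemma EE_inj : Function.Injective EE := by
  intro i j h
  have : vv i = vv j := Finsupp.equivFunOnFinite.symm.injective h
  have := congrFun this
  fin_cases i <;> fin_cases j <;> first | rfl | (exfalso; revert this; decide)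

lemma finsupp_eq_EE (i : Fin 6) (f : Fin 3 →₀ ℕ) (h : ∀ j, f j = vv i j) : f = EE i := by
  apply DFunLike.ext
  intro j
  rw [EE_apply]; exact h j

lemma hg0 : (X 0 ^ 4 : R3) = monomial (R := k) (EE 0) 1 := by
  rw [X_pow_eq]
  exact congrArg (fun e => monomial (R := k) e 1) (finsupp_eq_EE 0 _ (by intro j; fin_cases j <;> simp only [vv, Finsupp.coe_add, Pi.add_apply, Finsupp.single_apply] <;> decide))

lemma hg1 : (X 0 ^ 3 * X 1 : R3) = monomial (R := k) (EE 1) 1 := by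
  rw [X_pow_eq, X_def, monomial_mul_monomial, one_mul]
  exact congrArg (fun e => monomial (R := k) e 1) (finsupp_eq_EE 1 _ (by intro j; fin_cases j <;> simp only [vv, Finsupp.coe_add, Pi.add_apply, Finsupp.single_apply] <;> decide))

lemma hg2 : (X 0 ^ 2 * X 1 ^ 2 : R3) = monomial (R := k) (EE 2) 1 := by
  rw [X_pow_eq, X_pow_eq, monomial_mul_monomial, one_mul]
  exact congrArg (fun e => monomial (R := k) e 1) (finsupp_eq_EE 2 _ (by intro j; fin_cases j <;> simp only [vv, Finsupp.coe_add, Pi.add_apply, Finsupp.single_apply] <;> decide))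

lemma hg3 : (X 0 * X 1 ^ 3 : R3) = monomial (R := k) (EE 3) 1 := by
  rw [X_def, X_pow_eq, monomial_mul_monomial, one_mul]
  exact congrArg (fun e => monomial (R := k) e 1) (finsupp_eq_EE 3 _ (by intro j; fin_cases j <;> simp only [vv, Finsupp.coe_add, Pi.add_apply, Finsupp.single_apply] <;> decide))

lemma hg4 : (X 1 ^ 4 : R3) = monomial (R := k) (EE 4) 1 := by
  rw [X_pow_eq]
  exact congrArg (fun e => monomial (R := k) e 1) (finsupp_eq_EE 4 _ (by intro j; fin_cases j <;> simp only [vv, Finsupp.coe_add, Pi.add_apply, Finsupp.single_apply] <;> decide))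

lemma hg5 : (X 2 : R3) = monomial (R := k) (EE 5) 1 := by
  rw [X_def]
  exact congrArg (fun e => monomial (R := k) e 1) (finsupp_eq_EE 5 _ (by intro j; fin_cases j <;> simp only [vv, Finsupp.coe_add, Pi.add_apply, Finsupp.single_apply] <;> decide))

noncomputable def Ea (a : ℕ) : Fin 3 →₀ ℕ := Finsupp.single 0 a + Finsupp.single 1 (4 - a)

lemma Ea_apply0 (a : ℕ) : Ea a 0 = a := by
  simp [Ea, Finsupp.single_apply]
lemma Ea_apply1 (a : ℕ) : Ea a 1 = 4 - a := by
  simp [Ea, Finsupp.single_apply]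
lemma Ea_apply2 (a : ℕ) : Ea a 2 = 0 := by
  simp [Ea, Finsupp.single_apply]

lemma Ea_le_iff (a : ℕ) (d : Fin 3 →₀ ℕ) : Ea a ≤ d ↔ a ≤ d 0 ∧ 4 - a ≤ d 1 := by
  rw [Finsupp.le_def]
  constructor
  · intro h
    exact ⟨by simpa [Ea_apply0] using h 0, by simpa [Ea_apply1] using h 1⟩
  · rintro ⟨h0, h1⟩ j
    fin_cases j
    · simpa [Ea_apply0] using h0
    · simpa [Ea_apply1] using h1
    · simp [Ea_apply2]

lemma single21_le_iff (d : Fin 3 →₀ ℕ) : Finsupp.single (2 : Fin 3) 1 ≤ d ↔ 1 ≤ d 2 := by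
  rw [Finsupp.le_def]
  constructor
  · intro h; simpa [Finsupp.single_apply] using h 2
  · intro h j; fin_cases j <;> simp [Finsupp.single_apply] <;> omega

noncomputable def gg (f : R3) : R3 := fun e => coeff (R := k) (e + Finsupp.single 2 1) f

noncomputable def hh (a : ℕ) (f : R3) : R3 :=
  fun e => if e 2 = 0 ∧ (a < 4 → e 0 = 0) then coeff (R := k) (e + Ea a) f else 0

lemma coeff_gg (f : R3) (d) : coeff (R := k) d (gg f) = coeff (R := k) (d + Finsupp.single 2 1) f := rfl

lemma coeff_hh (a : ℕ) (f : R3) (d) :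
    coeff (R := k) d (hh a f) = if d 2 = 0 ∧ (a < 4 → d 0 = 0) then coeff (R := k) (d + Ea a) f else 0 := rfl

lemma sub_apply_of_le {e d : Fin 3 →₀ ℕ} (j : Fin 3) : (d - e) j = d j - e j :=
  Finsupp.tsub_apply d e j

lemma coeff_ggX2 (f : R3) (d) :
    coeff (R := k) d (gg f * X 2) = if 1 ≤ d 2 then coeff (R := k) d f else 0 := by
  rw [X_def, coeff_mul_monomial]
  by_cases h : (Finsupp.single (2:Fin 3) 1) ≤ d
  · rw [if_pos h, if_pos ((single21_le_iff d).mp h), coeff_gg,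
      tsub_add_cancel_of_le h, mul_one]
  · rw [if_neg h, if_neg (by rw [← single21_le_iff]; exact h)]

lemma coeff_hhEa (a : ℕ) (ha : a ≤ 4) (f : R3) (d) :
    coeff (R := k) d (hh a f * monomial (R := k) (Ea a) 1) =
      if (a ≤ d 0 ∧ 4 - a ≤ d 1) ∧ d 2 = 0 ∧ (a < 4 → d 0 = a) then coeff (R := k) d f else 0 := by
  rw [coeff_mul_monomial]
  by_cases h : Ea a ≤ d
  · have h' := (Ea_le_iff a d).mp h
    rw [if_pos h, coeff_hh, mul_one]
    have e2 : (d - Ea a) 2 = d 2 := by rw [sub_apply_of_le, Ea_apply2, Nat.sub_zero]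
    have e0 : (d - Ea a) 0 = d 0 - a := by rw [sub_apply_of_le, Ea_apply0]
    have key : ((d - Ea a) 2 = 0 ∧ (a < 4 → (d - Ea a) 0 = 0)) ↔
        ((a ≤ d 0 ∧ 4 - a ≤ d 1) ∧ d 2 = 0 ∧ (a < 4 → d 0 = a)) := by
      rw [e2, e0]
      constructor
      · rintro ⟨h2, h0⟩
        exact ⟨h', h2, fun hlt => by have := h0 hlt; omega⟩
      · rintro ⟨-, h2, h0⟩
        exact ⟨h2, fun hlt => by have := h0 hlt; omega⟩
    by_cases hc : (d - Ea a) 2 = 0 ∧ (a < 4 → (d - Ea a) 0 = 0)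
    · rw [if_pos hc, if_pos (key.mp hc), tsub_add_cancel_of_le h]
    · rw [if_neg hc, if_neg (fun hx => hc (key.mpr hx))]
  · rw [if_neg h, if_neg]
    rintro ⟨h1, -⟩
    exact h ((Ea_le_iff a d).mpr h1)

lemma wt_EE (i : Fin 6) : wt (EE i) = 4 := by
  rw [wt, EE_apply, EE_apply, EE_apply]
  revert i; decide

lemma monomial_mem_AA {n : ℕ} {e : Fin 3 →₀ ℕ} (h : n ≤ wt e) (a : k) :
    (monomial (R := k) e a : R3) ∈ AA k n := by
  classical
  intro d hd
  rw [coeff_monomial] at hd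
  by_cases hde : d = e
  · rwa [hde]
  · exact absurd (if_neg hde) hd

lemma Ea_eq_EE0 : Ea 0 = EE 4 :=
  finsupp_eq_EE _ _ (by intro j; fin_cases j <;> simp [Ea, vv, Finsupp.single_apply])
lemma Ea_eq_EE1 : Ea 1 = EE 3 :=
  finsupp_eq_EE _ _ (by intro j; fin_cases j <;> simp [Ea, vv, Finsupp.single_apply])
lemma Ea_eq_EE2 : Ea 2 = EE 2 :=
  finsupp_eq_EE _ _ (by intro j; fin_cases j <;> simp [Ea, vv, Finsupp.single_apply])
lemma Ea_eq_EE3 : Ea 3 = EE 1 :=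
  finsupp_eq_EE _ _ (by intro j; fin_cases j <;> simp [Ea, vv, Finsupp.single_apply])
lemma Ea_eq_EE4 : Ea 4 = EE 0 :=
  finsupp_eq_EE _ _ (by intro j; fin_cases j <;> simp [Ea, vv, Finsupp.single_apply])

lemma decomp (f : R3) (hf : ∀ d : Fin 3 →₀ ℕ, coeff (R := k) d f ≠ 0 → d 2 = 0 → 4 ≤ d 0 + d 1) :
    f = gg f * X 2 + ∑ a ∈ Finset.range 5, hh a f * monomial (R := k) (Ea a) 1 := by
  apply MvPowerSeries.ext; intro d
  rw [map_add, map_sum, coeff_ggX2]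
  rw [Finset.sum_congr rfl (fun a ha =>
    coeff_hhEa a (by have := Finset.mem_range.mp ha; omega) f d)]
  by_cases h2 : 1 ≤ d 2
  · rw [if_pos h2, Finset.sum_eq_zero, add_zero]
    intro a _
    rw [if_neg]
    rintro ⟨-, hz, -⟩
    omega
  · have h2' : d 2 = 0 := by omega
    rw [if_neg h2, zero_add]
    by_cases hc : coeff (R := k) d f = 0
    · rw [hc]
      symm
      apply Finset.sum_eq_zero
      intro a _
      simp [hc]
    · have h4 : 4 ≤ d 0 + d 1 := hf d hc h2'
      symm
      rw [Finset.sum_eq_single (min (d 0) 4)]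
      · rw [if_pos]
        refine ⟨⟨by omega, by omega⟩, h2', by omega⟩
      · intro b hb hbne
        have hb5 : b < 5 := Finset.mem_range.mp hb
        rw [if_neg]
        rintro ⟨⟨hb0, hb1⟩, -, hb4⟩
        omega
      · intro h
        exact absurd (Finset.mem_range.mpr (by omega)) h

lemma AA4_le_span :
    AA k 4 ≤ Ideal.span {(X 0 ^ 4 : R3), X 0 ^ 3 * X 1, X 0 ^ 2 * X 1 ^ 2, X 0 * X 1 ^ 3,
      X 1 ^ 4, X 2} := by
  intro f hf
  have hf' : ∀ d : Fin 3 →₀ ℕ, coeff (R := k) d f ≠ 0 → d 2 = 0 → 4 ≤ d 0 + d 1 := by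
    intro d hd h2
    have := hf d hd
    rw [wt, h2] at this
    omega
  rw [decomp f hf']
  apply Ideal.add_mem
  · exact Ideal.mul_mem_left _ _ (Ideal.subset_span (by simp))
  · apply Ideal.sum_mem
    intro a ha
    apply Ideal.mul_mem_left
    apply Ideal.subset_span
    have ha5 : a < 5 := Finset.mem_range.mp ha
    interval_cases a
    · rw [Ea_eq_EE0, ← hg4]; simp
    · rw [Ea_eq_EE1, ← hg3]; simp
    · rw [Ea_eq_EE2, ← hg2]; simp
    · rw [Ea_eq_EE3, ← hg1]; simp
    · rw [Ea_eq_EE4, ← hg0]; simp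

lemma span_le_AA4 :
    Ideal.span {(X 0 ^ 4 : R3), X 0 ^ 3 * X 1, X 0 ^ 2 * X 1 ^ 2, X 0 * X 1 ^ 3,
      X 1 ^ 4, X 2} ≤ AA k 4 := by
  rw [Ideal.span_le]
  intro x hx
  simp only [Set.mem_insert_iff, Set.mem_singleton_iff] at hx
  rcases hx with rfl | rfl | rfl | rfl | rfl | rfl
  · rw [hg0]; exact monomial_mem_AA (by rw [wt_EE]) 1
  · rw [hg1]; exact monomial_mem_AA (by rw [wt_EE]) 1
  · rw [hg2]; exact monomial_mem_AA (by rw [wt_EE]) 1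
  · rw [hg3]; exact monomial_mem_AA (by rw [wt_EE]) 1
  · rw [hg4]; exact monomial_mem_AA (by rw [wt_EE]) 1
  · rw [hg5]; exact monomial_mem_AA (by rw [wt_EE]) 1

lemma J_le_AA4 :
    Ideal.span {(X 0 ^ 4 : R3), X 1 ^ 4, X 2} ≤ AA k 4 := by
  rw [Ideal.span_le]
  intro x hx
  simp only [Set.mem_insert_iff, Set.mem_singleton_iff] at hx
  rcases hx with rfl | rfl | rfl
  · rw [hg0]; exact monomial_mem_AA (by rw [wt_EE]) 1
  · rw [hg4]; exact monomial_mem_AA (by rw [wt_EE]) 1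
  · rw [hg5]; exact monomial_mem_AA (by rw [wt_EE]) 1

lemma X_mem_AA1 (j : Fin 3) : (X j : R3) ∈ AA k 1 := by
  rw [X_def]
  apply monomial_mem_AA
  fin_cases j <;> simp [wt, Finsupp.single_apply]

lemma m_le_AA1 : Ideal.span {(X 0 : R3), X 1, X 2} ≤ AA k 1 := by
  rw [Ideal.span_le]
  intro x hx
  simp only [Set.mem_insert_iff, Set.mem_singleton_iff] at hx
  rcases hx with rfl | rfl | rfl <;> exact X_mem_AA1 _

lemma exists_coeff_ne (f : R3) (hf : f ≠ 0) : ∃ d, coeff (R := k) d f ≠ 0 := by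
  by_contra h
  push_neg at h
  exact hf (MvPowerSeries.ext fun d => by simp [h d])

lemma exact_mul {f g : R3} {n m : ℕ} (hf1 : f ∈ AA k n) (hg1 : g ∈ AA k m)
    (hf2 : ∃ d, coeff (R := k) d f ≠ 0 ∧ wt d = n) (hg2 : ∃ d, coeff (R := k) d g ≠ 0 ∧ wt d = m) :
    ∃ d, coeff (R := k) d (f * g) ≠ 0 ∧ wt d = n + m := by
  classical
  obtain ⟨df, hdf, hwf⟩ := hf2
  obtain ⟨dg, hdg, hwg⟩ := hg2
  set P : R3 := (fun e => if wt e = n then coeff (R := k) e f else 0) with hPdef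
  set Q : R3 := (fun e => if wt e = m then coeff (R := k) e g else 0) with hQdef
  have coeffP : ∀ e, coeff (R := k) e P = if wt e = n then coeff (R := k) e f else 0 := fun e => rfl
  have coeffQ : ∀ e, coeff (R := k) e Q = if wt e = m then coeff (R := k) e g else 0 := fun e => rfl
  have hPne : P ≠ 0 := by
    intro h0
    apply hdf
    have := congrArg (coeff (R := k) df) h0
    rwa [coeffP, if_pos hwf, map_zero] at this
  have hQne : Q ≠ 0 := by
    intro h0
    apply hdg
    have := congrArg (coeff (R := k) dg) h0
    rwa [coeffQ, if_pos hwg, map_zero] at this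
  obtain ⟨d, hd⟩ := exists_coeff_ne (P * Q) (mul_ne_zero hPne hQne)
  have hsum := hd
  rw [coeff_mul] at hsum
  obtain ⟨p, hp, hne⟩ := Finset.exists_ne_zero_of_sum_ne_zero hsum
  have hps : p.1 + p.2 = d := by rwa [Finset.HasAntidiagonal.mem_antidiagonal] at hp
  have hw1 : wt p.1 = n := by
    by_contra hw
    rw [coeffP, if_neg hw, zero_mul] at hne
    exact hne rfl
  have hw2 : wt p.2 = m := by
    by_contra hw
    rw [coeffQ, if_neg hw, mul_comm, zero_mul] at hne
    exact hne rfl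
  have hwd : wt d = n + m := by rw [← hps, wt_add, hw1, hw2]
  refine ⟨d, ?_, hwd⟩
  have : coeff (R := k) d (f * g) = coeff (R := k) d (P * Q) := by
    rw [coeff_mul, coeff_mul]
    apply Finset.sum_congr rfl
    intro q hq
    have hqs : q.1 + q.2 = d := by rwa [Finset.HasAntidiagonal.mem_antidiagonal] at hq
    have hqw : wt q.1 + wt q.2 = n + m := by rw [← wt_add, hqs, hwd]
    rcases lt_trichotomy (wt q.1) n with hlt | heq | hgt
    · have h1 : coeff (R := k) q.1 f = 0 := by
        by_contra hne1
        exact absurd (hf1 q.1 hne1) (by omega)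
      rw [h1, coeffP, if_neg (by omega), zero_mul, zero_mul]
    · have h2 : wt q.2 = m := by omega
      rw [coeffP, if_pos heq, coeffQ, if_pos h2]
    · have h2 : coeff (R := k) q.2 g = 0 := by
        by_contra hne2
        exact absurd (hg1 q.2 hne2) (by omega)
      rw [h2, coeffQ, if_neg (by omega), mul_zero, mul_zero]
  rw [this]
  exact hd

lemma exact_pow {r : R3} {n : ℕ} (h1 : r ∈ AA k n) (h2 : ∃ d, coeff (R := k) d r ≠ 0 ∧ wt d = n)
    (m : ℕ) : r ^ m ∈ AA k (m * n) ∧ ∃ d, coeff (R := k) d (r ^ m) ≠ 0 ∧ wt d = m * n := by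
  induction m with
  | zero =>
    constructor
    · intro d _; simp
    · refine ⟨0, ?_, by simp [wt]⟩
      rw [pow_zero]
      simp
  | succ m ih =>
    rw [pow_succ]
    constructor
    · have := mul_mem_AA ih.1 h1
      have harith : m * n + n = (m + 1) * n := by ring
      rwa [harith] at this
    · have := exact_mul ih.1 h1 ih.2 h2
      have harith : m * n + n = (m + 1) * n := by ring
      rwa [harith] at this

lemma integral_mem_AA4 {K : Ideal R3} (hK : K ≤ AA k 4) {r : R3}
    (h : IsIntegralOverIdeal K r) : r ∈ AA k 4 := by
  by_contra hr
  have hex : ∃ d, coeff (R := k) d r ≠ 0 ∧ wt d < 4 := by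
    simp only [AA, Ideal.submodule_span_eq, Submodule.mem_mk, AddSubmonoid.mem_mk,
      AddSubsemigroup.mem_mk, Set.mem_setOf_eq] at hr
    push_neg at hr
    obtain ⟨d, hd1, hd2⟩ := hr
    exact ⟨d, hd1, by omega⟩
  obtain ⟨d0, hd0, hd0w⟩ := hex
  set S : Set ℕ := {m | ∃ d, coeff (R := k) d r ≠ 0 ∧ wt d = m} with hSdef
  have hSne : S.Nonempty := ⟨wt d0, d0, hd0, rfl⟩
  set n := sInf S with hn
  have hnS : n ∈ S := Nat.sInf_mem hSne
  have hn4 : n < 4 := lt_of_le_of_lt (Nat.sInf_le ⟨d0, hd0, rfl⟩) hd0w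
  have hrAA : r ∈ AA k n := fun d hd => Nat.sInf_le ⟨d, hd, rfl⟩
  obtain ⟨m, hm, a, ha, heq⟩ := h
  obtain ⟨hpow, dstar, hdstar, hwstar⟩ :=
    (exact_pow hrAA hnS m).imp id id
  -- the sum lies in AA (m*n+1)
  have hsum : (∑ j ∈ Finset.Icc 1 m, a j * r ^ (m - j)) ∈ AA k (m * n + 1) := by
    apply Ideal.sum_mem
    intro j hj
    have hj1 : 1 ≤ j := (Finset.mem_Icc.mp hj).1
    have hjm : j ≤ m := (Finset.mem_Icc.mp hj).2
    have h1 : a j ∈ AA k (4 * j) := pow_le_AA hK j (ha j hj)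
    have h2 : r ^ (m - j) ∈ AA k ((m - j) * n) := (exact_pow hrAA hnS (m - j)).1
    have h3 : a j * r ^ (m - j) ∈ AA k (4 * j + (m - j) * n) := mul_mem_AA h1 h2
    refine AA_mono ?_ h3
    have : m - j + j = m := by omega
    nlinarith [Nat.sub_add_cancel hjm, hn4, hj1]
  have hrm : r ^ m = -∑ j ∈ Finset.Icc 1 m, a j * r ^ (m - j) := by
    linear_combination heq
  have : r ^ m ∈ AA k (m * n + 1) := by
    rw [hrm]
    exact neg_mem hsum
  have := this dstar hdstar
  omega

lemma gen_mem_IS (γ : ℕ) (hγ : γ ≤ 4) :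
    (X 0 ^ γ * X 1 ^ (4 - γ) : R3) ∈ Ideal.span {(X 0 ^ 4 : R3), X 0 ^ 3 * X 1,
      X 0 ^ 2 * X 1 ^ 2, X 0 * X 1 ^ 3, X 1 ^ 4, X 2} := by
  interval_cases γ <;> (apply Ideal.subset_span; norm_num)

lemma X2_mem_JS : (X 2 : R3) ∈ Ideal.span {(X 0 ^ 4 : R3), X 1 ^ 4, X 2} :=
  Ideal.subset_span (by simp)

lemma key_prod (α β : ℕ) (hα : α ≤ 4) (hβ : β ≤ 4) :
    (X 0 ^ α * X 1 ^ (4 - α)) * (X 0 ^ β * X 1 ^ (4 - β)) ∈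
      Ideal.span {(X 0 ^ 4 : R3), X 1 ^ 4, X 2} *
      Ideal.span {(X 0 ^ 4 : R3), X 0 ^ 3 * X 1, X 0 ^ 2 * X 1 ^ 2, X 0 * X 1 ^ 3,
        X 1 ^ 4, X 2} := by
  rcases le_or_gt 4 (α + β) with h | h
  · have e1 : α + β = 4 + (α + β - 4) := by omega
    have e2 : (4 - α) + (4 - β) = 4 - (α + β - 4) := by omega
    have key : (X 0 ^ α * X 1 ^ (4 - α)) * (X 0 ^ β * X 1 ^ (4 - β)) =
        (X 0 ^ 4 : R3) * (X 0 ^ (α + β - 4) * X 1 ^ (4 - (α + β - 4))) := by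
      calc (X 0 ^ α * X 1 ^ (4 - α)) * (X 0 ^ β * X 1 ^ (4 - β))
          = (X 0 ^ α * X 0 ^ β) * (X 1 ^ (4 - α) * X 1 ^ (4 - β)) := by ring
        _ = (X 0 ^ (α + β) : R3) * X 1 ^ ((4 - α) + (4 - β)) := by
            rw [← pow_add, ← pow_add]
        _ = (X 0 ^ (4 + (α + β - 4)) : R3) * X 1 ^ (4 - (α + β - 4)) := by
            rw [← e1, ← e2]
        _ = (X 0 ^ 4 : R3) * (X 0 ^ (α + β - 4) * X 1 ^ (4 - (α + β - 4))) := by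
            rw [pow_add]; ring
    rw [key]
    exact Ideal.mul_mem_mul (Ideal.subset_span (by simp)) (gen_mem_IS _ (by omega))
  · have e2 : (4 - α) + (4 - β) = 4 + (4 - (α + β)) := by omega
    have key : (X 0 ^ α * X 1 ^ (4 - α)) * (X 0 ^ β * X 1 ^ (4 - β)) =
        (X 1 ^ 4 : R3) * (X 0 ^ (α + β) * X 1 ^ (4 - (α + β))) := by
      calc (X 0 ^ α * X 1 ^ (4 - α)) * (X 0 ^ β * X 1 ^ (4 - β))
          = (X 0 ^ α * X 0 ^ β) * (X 1 ^ (4 - α) * X 1 ^ (4 - β)) := by ring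
        _ = (X 0 ^ (α + β) : R3) * X 1 ^ ((4 - α) + (4 - β)) := by
            rw [← pow_add, ← pow_add]
        _ = (X 0 ^ (α + β) : R3) * X 1 ^ (4 + (4 - (α + β))) := by rw [← e2]
        _ = (X 1 ^ 4 : R3) * (X 0 ^ (α + β) * X 1 ^ (4 - (α + β))) := by
            rw [pow_add]; ring
    rw [key]
    exact Ideal.mul_mem_mul (Ideal.subset_span (by simp)) (gen_mem_IS _ (by omega))

lemma gen_form (x : R3) (hx : x ∈ ({(X 0 ^ 4 : R3), X 0 ^ 3 * X 1, X 0 ^ 2 * X 1 ^ 2,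
    X 0 * X 1 ^ 3, X 1 ^ 4, X 2} : Set (MvPowerSeries (Fin 3) k))) :
    (∃ γ ≤ 4, x = X 0 ^ γ * X 1 ^ (4 - γ)) ∨ x = X 2 := by
  simp only [Set.mem_insert_iff, Set.mem_singleton_iff] at hx
  rcases hx with rfl | rfl | rfl | rfl | rfl | rfl
  · exact Or.inl ⟨4, by omega, by norm_num⟩
  · exact Or.inl ⟨3, by omega, by norm_num⟩
  · exact Or.inl ⟨2, by omega, by norm_num⟩
  · exact Or.inl ⟨1, by omega, by norm_num⟩
  · exact Or.inl ⟨0, by omega, by norm_num⟩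
  · exact Or.inr rfl

lemma II_le_JI :
    Ideal.span {(X 0 ^ 4 : R3), X 0 ^ 3 * X 1, X 0 ^ 2 * X 1 ^ 2, X 0 * X 1 ^ 3,
        X 1 ^ 4, X 2} *
      Ideal.span {(X 0 ^ 4 : R3), X 0 ^ 3 * X 1, X 0 ^ 2 * X 1 ^ 2, X 0 * X 1 ^ 3,
        X 1 ^ 4, X 2} ≤
    Ideal.span {(X 0 ^ 4 : R3), X 1 ^ 4, X 2} *
      Ideal.span {(X 0 ^ 4 : R3), X 0 ^ 3 * X 1, X 0 ^ 2 * X 1 ^ 2, X 0 * X 1 ^ 3,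
        X 1 ^ 4, X 2} := by
  rw [Ideal.span_mul_span, Ideal.span_le]
  intro x hx
  simp only [Set.mem_mul, Set.mem_iUnion, Set.mem_singleton_iff, exists_prop] at hx
  obtain ⟨a, ha, b, hb, rfl⟩ := hx
  rcases gen_form a ha with ⟨α, hα, rfl⟩ | rfl
  · rcases gen_form b hb with ⟨β, hβ, rfl⟩ | rfl
    · exact key_prod α β hα hβ
    · rw [mul_comm (X 0 ^ α * X 1 ^ (4 - α)) (X 2 : R3)]
      exact Ideal.mul_mem_mul X2_mem_JS (Ideal.subset_span ha)
  · exact Ideal.mul_mem_mul X2_mem_JS (Ideal.subset_span hb)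

lemma X0pow4_ne_zero : (X 0 ^ 4 : R3) ≠ 0 := by
  intro h
  have := congrArg (coeff (R := k) (EE 0)) h
  rw [hg0, coeff_monomial_same, map_zero] at this
  exact one_ne_zero this

lemma mem_IS_integral {r : R3}
    (hr : r ∈ Ideal.span {(X 0 ^ 4 : R3), X 0 ^ 3 * X 1, X 0 ^ 2 * X 1 ^ 2, X 0 * X 1 ^ 3,
      X 1 ^ 4, X 2}) :
    IsIntegralOverIdeal (Ideal.span {(X 0 ^ 4 : R3), X 1 ^ 4, X 2}) r := by
  classical
  set IS := Ideal.span {(X 0 ^ 4 : R3), X 0 ^ 3 * X 1, X 0 ^ 2 * X 1 ^ 2, X 0 * X 1 ^ 3,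
      X 1 ^ 4, X 2} with hISdef
  set JS := Ideal.span {(X 0 ^ 4 : R3), X 1 ^ 4, X 2} with hJSdef
  have hfg : IS.FG := by
    refine ⟨{(X 0 ^ 4 : R3), X 0 ^ 3 * X 1, X 0 ^ 2 * X 1 ^ 2, X 0 * X 1 ^ 3, X 1 ^ 4, X 2}, ?_⟩
    rw [hISdef]
    congr 1
    simp only [Finset.coe_insert, Finset.coe_singleton]
  haveI : Module.Finite R3 ↥IS := Module.Finite.iff_fg.mpr hfg
  set φ : Module.End R3 ↥IS := algebraMap R3 (Module.End R3 ↥IS) r with hφdef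
  have hrange : LinearMap.range φ ≤ JS • (⊤ : Submodule R3 ↥IS) := by
    rintro _ ⟨x, rfl⟩
    rw [Submodule.mem_smul_top_iff, Ideal.smul_eq_mul]
    have hc : (↑(φ x) : R3) = r * ↑x := by
      rw [hφdef, Module.algebraMap_end_apply]
      rfl
    rw [hc]
    exact II_le_JI (Ideal.mul_mem_mul hr x.2)
  obtain ⟨p, hpm, -, hpc, hp0⟩ :=
    LinearMap.exists_monic_and_natDegree_eq_and_coeff_mem_pow_and_aeval_eq_zero R3 φ JS hrange
  -- eval r p = 0
  have heval : Polynomial.eval r p = 0 := by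
    have h1 : Polynomial.aeval φ p = algebraMap R3 (Module.End R3 ↥IS) (Polynomial.eval r p) := by
      rw [hφdef]
      exact Polynomial.aeval_algebraMap_apply_eq_algebraMap_eval r p
    rw [h1] at hp0
    have h2 := congrArg (fun (ψ : Module.End R3 ↥IS) =>
      (ψ ⟨X 0 ^ 4, Ideal.subset_span (by simp)⟩ : R3)) hp0
    simp only [Module.algebraMap_end_apply, LinearMap.zero_apply, Submodule.coe_smul,
      ZeroMemClass.coe_zero, smul_eq_mul] at h2
    rcases mul_eq_zero.mp h2 with h | h
    · exact h
    · exact absurd h X0pow4_ne_zero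
  set n := p.natDegree with hndef
  have hn1 : 1 ≤ n := by
    by_contra hn
    have hn0 : p.natDegree = 0 := by omega
    have : p = 1 := hpm.natDegree_eq_zero.mp hn0
    rw [this] at heval
    simp at heval
  refine ⟨n, hn1, fun j => p.coeff (n - j), ?_, ?_⟩
  · intro j hj
    have hjn : j ≤ n := (Finset.mem_Icc.mp hj).2
    have := hpc (n - j)
    rw [Nat.sub_sub_self hjn] at this
    simpa using this
  · have hev : Polynomial.eval r p =
        ∑ i ∈ Finset.range (n + 1), p.coeff i * r ^ i := by
      rw [Polynomial.eval_eq_sum_range]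
    rw [Finset.sum_range_succ] at hev
    have hlead : p.coeff n * r ^ n = r ^ n := by
      rw [show p.coeff n = 1 from hpm.coeff_natDegree, one_mul]
    rw [hlead] at hev
    have hre : ∑ j ∈ Finset.Icc 1 n, p.coeff (n - j) * r ^ (n - j) =
        ∑ i ∈ Finset.range n, p.coeff i * r ^ i := by
      apply Finset.sum_nbij' (fun j => n - j) (fun i => n - i)
      · intro a ha
        have := Finset.mem_Icc.mp ha
        exact Finset.mem_range.mpr (by omega)
      · intro a ha
        have := Finset.mem_range.mp ha
        exact Finset.mem_Icc.mpr (by omega)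
      · intro a ha
        have := Finset.mem_Icc.mp ha
        omega
      · intro a ha
        have := Finset.mem_range.mp ha
        omega
      · intro a _
        rfl
    rw [hre, add_comm]
    rw [← hev, heval]

attribute [local instance 0] Classical.propDecidable

lemma G_inj : Function.Injective (fun i : Fin 6 => (monomial (R := k) (EE i) 1 : R3)) := by
  intro i j h
  apply EE_inj
  have := congrArg (coeff (R := k) (EE i)) h
  classical
  rw [coeff_monomial_same, coeff_monomial] at this
  by_contra hne
  rw [if_neg hne] at this
  exact one_ne_zero this

lemma G_mem_IS (i : Fin 6) : (monomial (R := k) (EE i) 1 : R3) ∈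
    Ideal.span {(X 0 ^ 4 : R3), X 0 ^ 3 * X 1, X 0 ^ 2 * X 1 ^ 2, X 0 * X 1 ^ 3,
      X 1 ^ 4, X 2} := by
  fin_cases i
  · show (monomial (R := k) (EE 0) 1 : R3) ∈ _
    exact Ideal.subset_span (by rw [← hg0]; simp)
  · show (monomial (R := k) (EE 1) 1 : R3) ∈ _
    exact Ideal.subset_span (by rw [← hg1]; simp)
  · show (monomial (R := k) (EE 2) 1 : R3) ∈ _
    exact Ideal.subset_span (by rw [← hg2]; simp)
  · show (monomial (R := k) (EE 3) 1 : R3) ∈ _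
    exact Ideal.subset_span (by rw [← hg3]; simp)
  · show (monomial (R := k) (EE 4) 1 : R3) ∈ _
    exact Ideal.subset_span (by rw [← hg4]; simp)
  · show (monomial (R := k) (EE 5) 1 : R3) ∈ _
    exact Ideal.subset_span (by rw [← hg5]; simp)

noncomputable def s6 (k : Type*) [Field k] : Finset (MvPowerSeries (Fin 3) k) :=
  Finset.image (fun i : Fin 6 => monomial (R := k) (EE i) 1) Finset.univ

lemma s6_card : (s6 k).card = 6 := by
  rw [s6, Finset.card_image_of_injective _ G_inj, Finset.card_univ, Fintype.card_fin]

lemma s6_span :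
    Submodule.span (MvPowerSeries (Fin 3) k) ((s6 k : Finset R3) : Set R3) =
    Ideal.span {(X 0 ^ 4 : R3), X 0 ^ 3 * X 1, X 0 ^ 2 * X 1 ^ 2, X 0 * X 1 ^ 3,
      X 1 ^ 4, X 2} := by
  have hcoe : ((s6 k : Finset R3) : Set R3) =
      Set.range (fun i : Fin 6 => (monomial (R := k) (EE i) 1 : R3)) := by
    rw [s6, Finset.coe_image, Finset.coe_univ, Set.image_univ]
  rw [hcoe]
  apply le_antisymm
  · rw [Submodule.span_le]
    rintro x ⟨i, rfl⟩
    exact G_mem_IS i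
  · rw [Ideal.span_le]
    intro x hx
    simp only [Set.mem_insert_iff, Set.mem_singleton_iff] at hx
    have hmem : ∀ i : Fin 6, (monomial (R := k) (EE i) 1 : R3) ∈
        Submodule.span (MvPowerSeries (Fin 3) k)
          (Set.range (fun i : Fin 6 => (monomial (R := k) (EE i) 1 : R3))) :=
      fun i => Submodule.subset_span ⟨i, rfl⟩
    rcases hx with rfl | rfl | rfl | rfl | rfl | rfl
    · rw [hg0]; exact hmem 0
    · rw [hg1]; exact hmem 1
    · rw [hg2]; exact hmem 2
    · rw [hg3]; exact hmem 3
    · rw [hg4]; exact hmem 4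
    · rw [hg5]; exact hmem 5

noncomputable def cmap (k : Type*) [Field k] : MvPowerSeries (Fin 3) k →ₗ[k] (Fin 6 → k) :=
  LinearMap.pi (fun i => coeff (R := k) (EE i))

lemma cmap_apply (f : R3) (i : Fin 6) : cmap k f i = coeff (R := k) (EE i) f := rfl

lemma cmap_vanish {f : R3} (hf : f ∈ AA k 5) : cmap k f = 0 := by
  funext i
  rw [cmap_apply]
  by_contra h
  have := hf (EE i) h
  rw [wt_EE] at this
  omega

lemma cmap_G (i : Fin 6) : cmap k (monomial (R := k) (EE i) 1) = Pi.single i 1 := by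
  classical
  funext j
  rw [cmap_apply, coeff_monomial, Pi.single_apply]
  by_cases h : j = i
  · rw [if_pos (by rw [h]), if_pos h]
  · rw [if_neg (fun he => h (EE_inj he)), if_neg h]

lemma sub_C_mem_AA1 (r : R3) : r - C (σ := Fin 3) (R := k) (constantCoeff (σ := Fin 3) (R := k) r) ∈ AA k 1 := by
  intro d hd
  by_contra hw
  have hw0 : wt d = 0 := by omega
  have hd0 : d = 0 := by
    apply DFunLike.ext
    intro j
    have h0 : d 0 = 0 ∧ d 1 = 0 ∧ d 2 = 0 := by
      rw [wt] at hw0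
      omega
    fin_cases j
    · exact h0.1
    · exact h0.2.1
    · exact h0.2.2
  rw [hd0, map_sub, coeff_zero_eq_constantCoeff_apply, coeff_zero_C, sub_self] at hd
  exact hd rfl

lemma six_le_card (s : Finset R3)
    (hs : Submodule.span (MvPowerSeries (Fin 3) k) (s : Set R3) =
      Ideal.span {(X 0 ^ 4 : R3), X 0 ^ 3 * X 1, X 0 ^ 2 * X 1 ^ 2, X 0 * X 1 ^ 3,
        X 1 ^ 4, X 2}) :
    6 ≤ s.card := by
  classical
  set W := Submodule.span k (cmap k '' (s : Set R3)) with hW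
  have main : ∀ f ∈ Submodule.span (MvPowerSeries (Fin 3) k) (s : Set R3), cmap k f ∈ W := by
    intro f hf
    induction hf using Submodule.span_induction with
    | mem x h => exact Submodule.subset_span ⟨x, h, rfl⟩
    | zero => rw [map_zero]; exact W.zero_mem
    | add x y hx hy ihx ihy => rw [map_add]; exact W.add_mem ihx ihy
    | smul a x hx ih =>
      have hxI : x ∈ AA k 4 := by
        rw [hs] at hx
        exact span_le_AA4 hx
      have hsplit : a • x = (constantCoeff (σ := Fin 3) (R := k) a) • x +
          (a - C (σ := Fin 3) (R := k) (constantCoeff (σ := Fin 3) (R := k) a)) * x := by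
        rw [smul_eq_mul, smul_eq_C_mul]
        ring
      rw [hsplit, map_add, map_smul]
      have h2 : cmap k ((a - C (σ := Fin 3) (R := k) (constantCoeff (σ := Fin 3) (R := k) a)) * x) = 0 :=
        cmap_vanish (mul_mem_AA (sub_C_mem_AA1 a) hxI)
      rw [h2, add_zero]
      exact W.smul_mem _ ih
  have hsingle : ∀ i : Fin 6, (Pi.single i 1 : Fin 6 → k) ∈ W := by
    intro i
    rw [← cmap_G i]
    apply main
    rw [hs]
    exact G_mem_IS i
  have hWtop : W = ⊤ := by
    rw [eq_top_iff]
    intro v _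
    have hv : v = ∑ i : Fin 6, v i • (Pi.single i 1 : Fin 6 → k) := by
      funext j
      rw [Finset.sum_apply]
      simp [Pi.single_apply]
    rw [hv]
    exact Submodule.sum_mem _ (fun i _ => W.smul_mem _ (hsingle i))
  have hdim : Module.finrank k W = 6 := by
    rw [hWtop, finrank_top]
    simp [Module.finrank_fintype_fun_eq_card]
  have hle : Module.finrank k W ≤ (s.image (cmap k)).card := by
    have heq : W = Submodule.span k ((s.image (cmap k) : Finset (Fin 6 → k)) :
        Set (Fin 6 → k)) := by
      rw [hW, Finset.coe_image]
    rw [heq]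
    exact finrank_span_finset_le_card _
  calc 6 = Module.finrank k W := hdim.symm
    _ ≤ (s.image (cmap k)).card := hle
    _ ≤ s.card := Finset.card_image_le

lemma nu_IS : nu (Ideal.span {(X 0 ^ 4 : R3), X 0 ^ 3 * X 1, X 0 ^ 2 * X 1 ^ 2, X 0 * X 1 ^ 3,
    X 1 ^ 4, X 2}) = 6 := by
  apply le_antisymm
  · apply Nat.sInf_le
    exact ⟨s6 k, s6_card, s6_span⟩
  · apply le_csInf
    · exact ⟨6, s6 k, s6_card, s6_span⟩
    · rintro n ⟨s, rfl, hsp⟩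
      exact six_le_card s hsp

lemma wt_d10 : wt (Finsupp.single (0 : Fin 3) 1) = 1 := by
  simp [wt, Finsupp.single_apply]

lemma wt_d01 : wt (Finsupp.single (1 : Fin 3) 1) = 1 := by
  simp [wt, Finsupp.single_apply]

lemma coeff_X_self (s : Fin 3) : coeff (R := k) (Finsupp.single s 1) (X s : R3) = 1 := by
  classical
  rw [coeff_X, if_pos rfl]

lemma coeff_X_ne (s t : Fin 3) (h : s ≠ t) :
    coeff (R := k) (Finsupp.single s 1) (X t : R3) = 0 := by
  classical
  rw [coeff_X, if_neg]
  intro he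
  have := congrArg (fun (d : Fin 3 →₀ ℕ) => d s) he
  simp [Finsupp.single_apply, Ne.symm h] at this

lemma not_mem_AA4_wt1 {f : R3} {d : Fin 3 →₀ ℕ} (hc : coeff (R := k) d f ≠ 0) (hw : wt d ≤ 3) :
    f ∉ AA k 4 := fun h => by have := h d hc; omega

section QuotientPart

variable {I : Ideal (MvPowerSeries (Fin 3) k)}

lemma I_le_AA4' (hI : I = Ideal.span {(X 0 ^ 4 : R3), X 0 ^ 3 * X 1, X 0 ^ 2 * X 1 ^ 2, X 0 * X 1 ^ 3,
    X 1 ^ 4, X 2}) : I ≤ AA k 4 := by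
  rw [hI]; exact span_le_AA4

lemma X0_not_mem_I (hI : I = Ideal.span {(X 0 ^ 4 : R3), X 0 ^ 3 * X 1, X 0 ^ 2 * X 1 ^ 2, X 0 * X 1 ^ 3,
    X 1 ^ 4, X 2}) : (X 0 : R3) ∉ I := by
  intro h
  exact not_mem_AA4_wt1 (by rw [coeff_X_self]; exact one_ne_zero) (by rw [wt_d10]; omega)
    (I_le_AA4' hI h)

lemma mkX0_ne_mkX1 (hI : I = Ideal.span {(X 0 ^ 4 : R3), X 0 ^ 3 * X 1, X 0 ^ 2 * X 1 ^ 2, X 0 * X 1 ^ 3,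
    X 1 ^ 4, X 2}) : Ideal.Quotient.mk I (X 0 : R3) ≠ Ideal.Quotient.mk I (X 1) := by
  intro h
  rw [Ideal.Quotient.eq] at h
  refine not_mem_AA4_wt1 (d := Finsupp.single (0 : Fin 3) 1) ?_ (by rw [wt_d10]; omega)
    (I_le_AA4' hI h)
  rw [map_sub, coeff_X_self, coeff_X_ne 0 1 (by decide), sub_zero]
  exact one_ne_zero

lemma quot_span_eq (hI : I = Ideal.span {(X 0 ^ 4 : R3), X 0 ^ 3 * X 1, X 0 ^ 2 * X 1 ^ 2, X 0 * X 1 ^ 3,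
    X 1 ^ 4, X 2}) :
    Submodule.span (MvPowerSeries (Fin 3) k ⧸ I)
      (({Ideal.Quotient.mk I (X 0), Ideal.Quotient.mk I (X 1)} :
        Finset (MvPowerSeries (Fin 3) k ⧸ I)) : Set (MvPowerSeries (Fin 3) k ⧸ I)) =
    (Ideal.span {(X 0 : R3), X 1, X 2}).map (Ideal.Quotient.mk I) := by
  have hX2 : Ideal.Quotient.mk I (X 2 : R3) = 0 := by
    rw [Ideal.Quotient.eq_zero_iff_mem, hI]
    exact Ideal.subset_span (by simp)
  apply le_antisymm
  · rw [Submodule.span_le]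
    intro x hx
    simp only [Finset.coe_insert, Finset.coe_singleton, Set.mem_insert_iff,
      Set.mem_singleton_iff] at hx
    rcases hx with rfl | rfl
    · exact Ideal.mem_map_of_mem _ (Ideal.subset_span (by simp))
    · exact Ideal.mem_map_of_mem _ (Ideal.subset_span (by simp))
  · rw [Ideal.map_span, Ideal.span_le]
    intro x hx
    simp only [Set.image_insert_eq, Set.image_singleton, Set.mem_insert_iff,
      Set.mem_singleton_iff] at hx
    rcases hx with rfl | rfl | rfl
    · exact Submodule.subset_span (by simp)
    · exact Submodule.subset_span (by simp)
    · rw [hX2]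
      exact Submodule.zero_mem _

lemma quot_card (hI : I = Ideal.span {(X 0 ^ 4 : R3), X 0 ^ 3 * X 1, X 0 ^ 2 * X 1 ^ 2, X 0 * X 1 ^ 3,
    X 1 ^ 4, X 2}) :
    ({Ideal.Quotient.mk I (X 0), Ideal.Quotient.mk I (X 1)} :
      Finset (MvPowerSeries (Fin 3) k ⧸ I)).card = 2 := by
  rw [Finset.card_insert_of_notMem (by simp only [Finset.mem_singleton]; exact mkX0_ne_mkX1 hI), Finset.card_singleton]

lemma two_le_quot_card (hI : I = Ideal.span {(X 0 ^ 4 : R3), X 0 ^ 3 * X 1, X 0 ^ 2 * X 1 ^ 2, X 0 * X 1 ^ 3,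
    X 1 ^ 4, X 2}) (s : Finset (MvPowerSeries (Fin 3) k ⧸ I))
    (hs : Submodule.span (MvPowerSeries (Fin 3) k ⧸ I)
        (s : Set (MvPowerSeries (Fin 3) k ⧸ I)) =
      (Ideal.span {(X 0 : R3), X 1, X 2}).map (Ideal.Quotient.mk I)) :
    2 ≤ s.card := by
  by_contra hlt
  push_neg at hlt
  interval_cases h : s.card
  · -- card 0
    rw [Finset.card_eq_zero] at h
    subst h
    rw [Finset.coe_empty, Submodule.span_empty] at hs
    have : Ideal.Quotient.mk I (X 0 : R3) ∈
        (Ideal.span {(X 0 : R3), X 1, X 2}).map (Ideal.Quotient.mk I) :=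
      Ideal.mem_map_of_mem _ (Ideal.subset_span (by simp))
    rw [← hs] at this
    rw [Submodule.mem_bot] at this
    rw [Ideal.Quotient.eq_zero_iff_mem] at this
    exact X0_not_mem_I hI this
  · -- card 1
    rw [Finset.card_eq_one] at h
    obtain ⟨y, rfl⟩ := h
    rw [Finset.coe_singleton] at hs
    -- y ∈ N, so y = mk g with g ∈ m
    have hyN : y ∈ (Ideal.span {(X 0 : R3), X 1, X 2}).map (Ideal.Quotient.mk I) := by
      rw [← hs]
      exact Submodule.subset_span rfl
    rw [Ideal.mem_map_iff_of_surjective _ Ideal.Quotient.mk_surjective] at hyN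
    obtain ⟨g, hgm, rfl⟩ := hyN
    have hgAA : g ∈ AA k 1 := m_le_AA1 hgm
    -- key coefficient facts
    have key : ∀ (j : Fin 3) (r : R3),
        Ideal.Quotient.mk I (X j) = Ideal.Quotient.mk I (r * g) →
        coeff (R := k) (Finsupp.single (0 : Fin 3) 1) (X j : R3) =
          constantCoeff (σ := Fin 3) (R := k) r * coeff (R := k) (Finsupp.single (0 : Fin 3) 1) g ∧
        coeff (R := k) (Finsupp.single (1 : Fin 3) 1) (X j : R3) =
          constantCoeff (σ := Fin 3) (R := k) r * coeff (R := k) (Finsupp.single (1 : Fin 3) 1) g := by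
      intro j r hj
      rw [Ideal.Quotient.eq] at hj
      have hj4 := I_le_AA4' hI hj
      have hsplit : r * g = C (σ := Fin 3) (R := k) (constantCoeff (σ := Fin 3) (R := k) r) * g +
          (r - C (σ := Fin 3) (R := k) (constantCoeff (σ := Fin 3) (R := k) r)) * g := by ring
      have h2 : (r - C (σ := Fin 3) (R := k) (constantCoeff (σ := Fin 3) (R := k) r)) * g ∈ AA k 2 :=
        mul_mem_AA (sub_C_mem_AA1 r) hgAA
      constructor
      · have hz : coeff (R := k) (Finsupp.single (0 : Fin 3) 1) (X j - r * g : R3) = 0 := by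
          by_contra hne
          exact not_mem_AA4_wt1 hne (by rw [wt_d10]; omega) hj4
        have hz2 : coeff (R := k) (Finsupp.single (0 : Fin 3) 1)
            ((r - C (σ := Fin 3) (R := k) (constantCoeff (σ := Fin 3) (R := k) r)) * g) = 0 := by
          by_contra hne
          have := h2 _ hne
          rw [wt_d10] at this
          omega
        rw [map_sub, sub_eq_zero] at hz
        rw [hz, hsplit, map_add, hz2, add_zero, coeff_C_mul]
      · have hz : coeff (R := k) (Finsupp.single (1 : Fin 3) 1) (X j - r * g : R3) = 0 := by
          by_contra hne
          exact not_mem_AA4_wt1 hne (by rw [wt_d01]; omega) hj4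
        have hz2 : coeff (R := k) (Finsupp.single (1 : Fin 3) 1)
            ((r - C (σ := Fin 3) (R := k) (constantCoeff (σ := Fin 3) (R := k) r)) * g) = 0 := by
          by_contra hne
          have := h2 _ hne
          rw [wt_d01] at this
          omega
        rw [map_sub, sub_eq_zero] at hz
        rw [hz, hsplit, map_add, hz2, add_zero, coeff_C_mul]
    -- X0 and X1 are in span {mk g}
    have hs' : Ideal.span {Ideal.Quotient.mk I g} =
        (Ideal.span {(X 0 : R3), X 1, X 2}).map (Ideal.Quotient.mk I) := hs
    have hx0 : ∃ a, a * Ideal.Quotient.mk I g = Ideal.Quotient.mk I (X 0 : R3) := by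
      rw [← Ideal.mem_span_singleton', hs']
      exact Ideal.mem_map_of_mem _ (Ideal.subset_span (by simp))
    have hx1 : ∃ a, a * Ideal.Quotient.mk I g = Ideal.Quotient.mk I (X 1 : R3) := by
      rw [← Ideal.mem_span_singleton', hs']
      exact Ideal.mem_map_of_mem _ (Ideal.subset_span (by simp))
    obtain ⟨a0, ha0⟩ := hx0
    obtain ⟨a1, ha1⟩ := hx1
    obtain ⟨r0, rfl⟩ := Ideal.Quotient.mk_surjective a0
    obtain ⟨r1, rfl⟩ := Ideal.Quotient.mk_surjective a1
    rw [← map_mul] at ha0 ha1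
    have k0 := key 0 r0 ha0.symm
    have k1 := key 1 r1 ha1.symm
    rw [coeff_X_self, coeff_X_ne 1 0 (by decide)] at k0
    rw [coeff_X_ne 0 1 (by decide), coeff_X_self] at k1
    -- 1 = c0 * g10, 0 = c0 * g01, 0 = c1 * g10, 1 = c1 * g01
    have hc0 : constantCoeff (σ := Fin 3) (R := k) r0 ≠ 0 := by
      intro h0
      rw [h0, zero_mul] at k0
      exact one_ne_zero k0.1
    have hg01 : coeff (R := k) (Finsupp.single (1 : Fin 3) 1) g = 0 := by
      rcases mul_eq_zero.mp k0.2.symm with h | h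
      · exact absurd h hc0
      · exact h
    rw [hg01, mul_zero] at k1
    exact one_ne_zero k1.2

lemma nu_quot (hI : I = Ideal.span {(X 0 ^ 4 : R3), X 0 ^ 3 * X 1, X 0 ^ 2 * X 1 ^ 2, X 0 * X 1 ^ 3,
    X 1 ^ 4, X 2}) : nu ((Ideal.span {(X 0 : R3), X 1, X 2}).map (Ideal.Quotient.mk I)) = 2 := by
  apply le_antisymm
  · exact Nat.sInf_le ⟨_, quot_card hI, quot_span_eq hI⟩
  · apply le_csInf
    · exact ⟨2, _, quot_card hI, quot_span_eq hI⟩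
    · rintro n ⟨s, rfl, hsp⟩
      exact two_le_quot_card hI s hsp

end QuotientPart

end Aux

open MvPowerSeries in
theorem stmt_16 {k : Type*} [Field k]
    (I : Ideal (MvPowerSeries (Fin 3) k))
    (hI : I = Ideal.span {X 0 ^ 4, X 0 ^ 3 * X 1, X 0 ^ 2 * X 1 ^ 2, X 0 * X 1 ^ 3,
      X 1 ^ 4, X 2}) :
    (∀ r, IsIntegralOverIdeal (Ideal.span {X 0 ^ 4, X 1 ^ 4, X 2}) r ↔ r ∈ I) ∧
      I.IsIntClosed ∧
      (∃ n, (Ideal.span {X 0, X 1, X 2} : Ideal (MvPowerSeries (Fin 3) k)) ^ n ≤ I) ∧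
      I ≤ Ideal.span {X 0, X 1, X 2} ∧
      nu I = 6 ∧ 3 + 2 < nu I ∧
      nu ((Ideal.span {X 0, X 1, X 2} :
        Ideal (MvPowerSeries (Fin 3) k)).map (Ideal.Quotient.mk I)) = 2 ∧
      X 2 ∈ I ∧ ContainsPartRSOP (Ideal.span {X 0, X 1, X 2}) I 1 3 := by
  classical
  have hle1 : I ≤ AA k 4 := I_le_AA4' hI
  have hle2 : AA k 4 ≤ I := by rw [hI]; exact AA4_le_span
  have hx0m : (X 0 : MvPowerSeries (Fin 3) k) ∈ Ideal.span {X 0, X 1, X 2} :=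
    Ideal.subset_span (by simp)
  have hx1m : (X 1 : MvPowerSeries (Fin 3) k) ∈ Ideal.span {X 0, X 1, X 2} :=
    Ideal.subset_span (by simp)
  have hx2m : (X 2 : MvPowerSeries (Fin 3) k) ∈ Ideal.span {X 0, X 1, X 2} :=
    Ideal.subset_span (by simp)
  refine ⟨?_, ?_, ?_, ?_, ?_, ?_, ?_, ?_, ?_⟩
  · intro r
    constructor
    · intro hint
      exact hle2 (integral_mem_AA4 J_le_AA4 hint)
    · intro hr
      rw [hI] at hr
      exact mem_IS_integral hr
  · intro r hint
    exact hle2 (integral_mem_AA4 hle1 hint)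
  · refine ⟨4, ?_⟩
    refine le_trans ?_ hle2
    have := pow_le_AA (m_le_AA1 (k := k)) 4
    simpa using this
  · rw [hI, Ideal.span_le]
    intro x hx
    simp only [Set.mem_insert_iff, Set.mem_singleton_iff] at hx
    rcases hx with rfl | rfl | rfl | rfl | rfl | rfl
    · exact Ideal.pow_mem_of_mem _ hx0m 4 (by norm_num)
    · exact Ideal.mul_mem_left _ _ hx1m
    · exact Ideal.mul_mem_left _ _ (Ideal.pow_mem_of_mem _ hx1m 2 (by norm_num))
    · exact Ideal.mul_mem_left _ _ (Ideal.pow_mem_of_mem _ hx1m 3 (by norm_num))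
    · exact Ideal.pow_mem_of_mem _ hx1m 4 (by norm_num)
    · exact hx2m
  · rw [hI]
    exact nu_IS
  · rw [hI, nu_IS]
    norm_num
  · exact nu_quot hI
  · rw [hI]
    exact Ideal.subset_span (by simp)
  · refine ⟨{X 2}, Finset.card_singleton _, ?_, {X 0, X 1, X 2}, ?_, ?_, ?_⟩
    · intro x hx
      simp only [Finset.coe_singleton, Set.mem_singleton_iff] at hx
      subst hx
      rw [hI]
      exact Ideal.subset_span (by simp)
    · intro x hx
      simp only [Finset.mem_singleton] at hx
      subst hx
      simp
    · rw [Finset.card_insert_of_notMem (by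
        simp only [Finset.mem_insert, Finset.mem_singleton]
        push_neg
        exact ⟨X_ne 0 1 (by decide), X_ne 0 2 (by decide)⟩),
        Finset.card_insert_of_notMem (by
          simp only [Finset.mem_singleton]
          exact X_ne 1 2 (by decide)),
        Finset.card_singleton]
    · congr 1
      simp only [Finset.coe_insert, Finset.coe_singleton]
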